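/- arXiv:2306.09693 — 2 statements merged into one kernel-verified Lean document; each statement's English description precedes it below -/
import Mathlib

section
/- Coherent matching fields for Gr(2,n) are in bijection with linear orders on {1,...,n} in the following sense: a matching field L for Gr(2,n) is coherent if and only if the relation a ≺ b defined by 'the tuple of L on {a,b} is (a,b)' is a strict total order on {1,...,n}. -/
/-! Coherence means `L a b ↔ f a < f b` (for `a ≠ b`) with `f := w 0 - w 1`, and a relation
pulled back from `<` on `ℝ` is a strict total order. Conversely, ranking each `a` by the number
of its `L`-predecessors is strictly monotone for a strict order on a finite type, and for a total
one it recovers `L`; take `w := (rank, 0)`. -/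

open Finset

section

variable {α β : Type*} {L : α → α → Prop}

theorem isStrictTotalOrder_of_iff_lt [Preorder β] (f : α → β)
    (hmf : ∀ a b, a ≠ b → (L a b ↔ ¬ L b a)) (hirr : ∀ a, ¬ L a a)
    (hf : ∀ a b, a ≠ b → (L a b ↔ f a < f b)) : IsStrictTotalOrder α L where
  irrefl := hirr
  trans a b c hab hbc := by
    have hne {x y} (h : L x y) : x ≠ y := by rintro rfl; exact hirr x h
    have hfac := ((hf a b (hne hab)).mp hab).trans ((hf b c (hne hbc)).mp hbc)
    exact (hf a c (fun h => (h ▸ hfac).false)).mpr hfac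
  trichotomous a b hab hba := by
    by_contra hne
    exact hab ((hmf a b hne).mpr hba)

theorem card_filter_rel_lt_card_filter_rel [Fintype α] [DecidableRel L] [IsStrictOrder α L]
    {a b : α} (hab : L a b) : #{x | L x a} < #{x | L x b} := by
  refine card_lt_card ⟨fun x hx => ?_, fun hsub => ?_⟩
  · simp only [mem_filter, mem_univ, true_and] at hx ⊢
    exact _root_.trans hx hab
  · have : a ∈ ({x | L x b} : Finset α) := by simpa using hab
    exact irrefl a (by simpa using hsub this)

theorem rel_iff_lt_of_rel_imp_lt [Std.Trichotomous L] [Preorder β] {f : α → β}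
    (hf : ∀ a b, L a b → f a < f b) (a b : α) : L a b ↔ f a < f b := by
  refine ⟨hf a b, fun hlt => ?_⟩
  rcases trichotomous_of L a b with h | rfl | h
  · exact h
  · exact absurd hlt (lt_irrefl _)
  · exact absurd (hf b a h) hlt.asymm

end

/-- A matching field for Gr(2,n), encoded by the relation `L a b` := "the tuple of
`L` on `{a,b}` is `(a,b)`" (so for `a ≠ b` exactly one of `L a b`, `L b a` holds,
and `L a a` never holds), is coherent — i.e. induced by some weight matrix
`w ∈ ℝ^{2×n}` via `L a b ↔ w 1 a + w 2 b < w 1 b + w 2 a` — if and only if the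
relation `L` is a strict total order on `{1,…,n}`. -/
theorem stmt7 (n : ℕ) (L : Fin n → Fin n → Prop)
    (hmf : ∀ a b : Fin n, a ≠ b → (L a b ↔ ¬ L b a))
    (hirr : ∀ a : Fin n, ¬ L a a) :
    (∃ w : Fin 2 → Fin n → ℝ,
        ∀ a b : Fin n, a ≠ b → (L a b ↔ w 0 a + w 1 b < w 0 b + w 1 a)) ↔
      IsStrictTotalOrder (Fin n) L := by
  classical
  constructor
  · rintro ⟨w, hw⟩
    refine isStrictTotalOrder_of_iff_lt (w 0 - w 1) hmf hirr fun a b hab => (hw a b hab).trans ?_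
    simp only [Pi.sub_apply]
    constructor <;> intro h <;> linarith
  · intro hL
    refine ⟨![fun a => (#{x | L x a} : ℝ), 0], fun a b _ => ?_⟩
    have hrank : ∀ a b, L a b → (#{x | L x a} : ℝ) < #{x | L x b} := fun a b h => by
      exact_mod_cast card_filter_rel_lt_card_filter_rel h
    simpa using rel_iff_lt_of_rel_imp_lt hrank a b
end

section
/- The diagonal matching field for Gr(k,n) is linkage: for every (k+1)-subset S of {1,...,n}, the bipartite graph on vertex sets {1,...,n} and {1,...,k} whose edge set is the union over all k-subsets I ⊆ S of the edges {(i_a, a) : a = 1,...,k}, where (i_1 < ... < i_k) is the increasing ordering of I, is a forest (contains no cycle). -/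
/-!
Send every vertex to a natural number, injectively, so that each edge joins two consecutive
integers; then the graph embeds into the Hasse diagram of `ℕ`, a path, which is acyclic.
A point `x ∈ S` goes to `2 r`, where `r` is its rank in `S`, and the column `a` goes to `2 a + 1`.
The `a`-th smallest element of a `k`-subset `I ⊆ S` has rank `a` or `a + 1` in `S`, because `S`
has only one point outside `I`, so each edge `(i_a, a)` joins consecutive heights.
-/

open SimpleGraph Finset

namespace SimpleGraph

variable {α : Type*} [LinearOrder α]

lemma hasse_walk_mem_edges_of_covBy {x z : α} (hxz : x ⋖ z) :
    ∀ {u v : α} (p : (hasse α).Walk u v), u ≤ x → z ≤ v → s(x, z) ∈ p.edges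
  | _, _, .nil, hu, hv => absurd (hu.trans_lt (hxz.lt.trans_le hv)) (lt_irrefl _)
  | u, _, .cons (v := w) h p, hu, hv => by
    rcases le_or_gt w x with hw | hw
    · exact List.mem_cons_of_mem _ (hasse_walk_mem_edges_of_covBy hxz p hw hv)
    · have huw : u ⋖ w :=
        (hasse_adj.1 h).resolve_right fun hwu => (hwu.lt.trans_le hu).not_gt hw
      obtain rfl : u = x := le_antisymm hu (not_lt.1 fun hux => huw.2 hux hw)
      obtain rfl : w = z :=
        le_antisymm (not_lt.1 fun hzw => huw.2 hxz.lt hzw) (not_lt.1 fun hzw => hxz.2 hw hzw)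
      exact List.mem_cons_self

theorem isAcyclic_hasse : (hasse α).IsAcyclic := by
  refine isAcyclic_iff_forall_adj_isBridge.2 fun v w h => ?_
  rcases hasse_adj.1 h with hvw | hwv
  · exact isBridge_iff_forall_walk_mem_edges.2 fun p =>
      hasse_walk_mem_edges_of_covBy hvw p le_rfl le_rfl
  · refine isBridge_iff_forall_walk_mem_edges.2 fun p => ?_
    rw [Sym2.eq_swap, ← List.mem_reverse, ← Walk.edges_reverse]
    exact hasse_walk_mem_edges_of_covBy hwv p.reverse le_rfl le_rfl

end SimpleGraph

namespace Finset

variable {α : Type*} [LinearOrder α]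

lemma card_filter_lt_orderEmbOfFin (s : Finset α) {k : ℕ} (h : #s = k) (i : Fin k) :
    #{y ∈ s | y < s.orderEmbOfFin h i} = i := by
  have : {y ∈ s | y < s.orderEmbOfFin h i} = (Iio i).map (s.orderEmbOfFin h).toEmbedding := by
    ext y
    simp only [mem_filter, mem_map, mem_Iio, RelEmbedding.coe_toEmbedding]
    constructor
    · rintro ⟨hy, hlt⟩
      obtain ⟨j, rfl⟩ : y ∈ Set.range (s.orderEmbOfFin h) := by rwa [range_orderEmbOfFin]
      exact ⟨j, (s.orderEmbOfFin h).lt_iff_lt.1 hlt, rfl⟩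
    · rintro ⟨j, hj, rfl⟩
      exact ⟨orderEmbOfFin_mem s h j, (s.orderEmbOfFin h).lt_iff_lt.2 hj⟩
  rw [this, card_map, Fin.card_Iio]

lemma card_filter_lt_lt_of_mem {s : Finset α} {x y : α} (hx : x ∈ s) (hxy : x < y) :
    #{z ∈ s | z < x} < #{z ∈ s | z < y} :=
  card_lt_card <| (ssubset_iff_of_subset fun z hz => by
    simp only [mem_filter] at hz ⊢; exact ⟨hz.1, hz.2.trans hxy⟩).2
    ⟨x, by simp [hx, hxy]⟩

lemma injOn_card_filter_lt (s : Finset α) : Set.InjOn (fun x => #{z ∈ s | z < x}) s := by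
  intro x hx y hy hxy
  by_contra hne
  rcases lt_or_gt_of_ne hne with h | h
  · exact (card_filter_lt_lt_of_mem hx h).ne hxy
  · exact (card_filter_lt_lt_of_mem hy h).ne hxy.symm

lemma card_filter_le_card_filter_add_card_sdiff (s t : Finset α) (p : α → Prop)
    [DecidablePred p] : #{y ∈ s | p y} ≤ #{y ∈ t | p y} + #(s \ t) :=
  calc #{y ∈ s | p y} ≤ #({y ∈ t | p y} ∪ (s \ t)) := card_le_card fun y hy => by
        by_cases hyt : y ∈ t <;> simp_all
    _ ≤ _ := card_union_le _ _

lemma card_filter_lt_orderEmbOfFin_of_subset {s t : Finset α} (hts : t ⊆ s) {k : ℕ}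
    (h : #t = k) (i : Fin k) :
    i ≤ #{y ∈ s | y < t.orderEmbOfFin h i} ∧ #{y ∈ s | y < t.orderEmbOfFin h i} ≤ i + #(s \ t) := by
  rw [← card_filter_lt_orderEmbOfFin t h i]
  exact ⟨card_le_card (filter_subset_filter _ hts), card_filter_le_card_filter_add_card_sdiff _ _ _⟩

end Finset

section DiagonalHeight

variable {n : ℕ} (S : Finset (Fin n)) (k : ℕ)

/-- Points outside `S` are isolated in the graph; they are parked above all other heights. -/
def diagonalHeight : Fin n ⊕ Fin k → ℕ :=
  Sum.elim (fun x => if x ∈ S then 2 * #{y ∈ S | y < x} else 2 * k + 3 + x) (fun a => 2 * a + 1)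

variable {S k}

lemma diagonalHeight_injective (hS : #S = k + 1) : Function.Injective (diagonalHeight S k) := by
  have rank_le (x : Fin n) : #{y ∈ S | y < x} ≤ k + 1 := hS ▸ card_filter_le _ _
  rintro (x | a) (y | b) hxy <;> simp only [diagonalHeight, Sum.elim_inl, Sum.elim_inr] at hxy
  · have := rank_le x
    have := rank_le y
    by_cases hx : x ∈ S <;> by_cases hy : y ∈ S <;> simp only [hx, hy, if_true, if_false] at hxy
    · exact congrArg _ (injOn_card_filter_lt S hx hy (by simp only; omega))
    · omega
    · omega
    · exact congrArg _ (Fin.ext (by omega))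
  · have := rank_le x
    split_ifs at hxy <;> omega
  · have := rank_le y
    split_ifs at hxy <;> omega
  · exact congrArg _ (Fin.ext (by omega))

lemma diagonalHeight_covBy (hS : #S = k + 1) {I : Finset (Fin n)} (hIS : I ⊆ S) (hI : #I = k)
    (a : Fin k) :
    diagonalHeight S k (.inl (I.orderEmbOfFin hI a)) ⋖ diagonalHeight S k (.inr a) ∨
      diagonalHeight S k (.inr a) ⋖ diagonalHeight S k (.inl (I.orderEmbOfFin hI a)) := by
  have hsdiff : #(S \ I) = 1 := by rw [card_sdiff_of_subset hIS, hS, hI]; omega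
  have hmem : I.orderEmbOfFin hI a ∈ S := hIS (orderEmbOfFin_mem I hI a)
  have := card_filter_lt_orderEmbOfFin_of_subset hIS hI a
  simp only [diagonalHeight, Sum.elim_inl, Sum.elim_inr, if_pos hmem, Nat.covBy_iff_add_one_eq]
  omega

end DiagonalHeight

theorem stmt12_general (k n : ℕ)
    (S : Finset (Fin n)) (hS : S.card = k + 1)
    (G : SimpleGraph (Fin n ⊕ Fin k))
    (hG : G = SimpleGraph.fromRel (fun u v =>
      ∃ (I : Finset (Fin n)) (hI : I.card = k) (a : Fin k),
        I ⊆ S ∧ u = Sum.inl ((I.orderIsoOfFin hI a : Fin n)) ∧ v = Sum.inr a)) :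
    G.IsAcyclic := by
  subst hG
  refine isAcyclic_hasse.comap ⟨diagonalHeight S k, fun {u v} huv => hasse_adj.2 ?_⟩
    (diagonalHeight_injective hS)
  obtain ⟨-, ⟨I, hI, a, hIS, rfl, rfl⟩ | ⟨I, hI, a, hIS, rfl, rfl⟩⟩ := (fromRel_adj _ _ _).1 huv
  · simpa only [coe_orderIsoOfFin_apply] using diagonalHeight_covBy hS hIS hI a
  · simpa only [coe_orderIsoOfFin_apply, or_comm] using diagonalHeight_covBy hS hIS hI a

/-- The diagonal matching field for Gr(k,n) is linkage: for every `(k+1)`-subset `S`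
of `{1,…,n}`, the bipartite graph on `{1,…,n} ⊔ {1,…,k}` whose edges are the union,
over all `k`-subsets `I ⊆ S`, of the edges `(i_a, a)` (where `i_1 < … < i_k` is the
increasing ordering of `I`), is a forest. -/
theorem stmt12 (k n : ℕ) (hk : 1 ≤ k) (hkn : k < n)
    (S : Finset (Fin n)) (hS : S.card = k + 1)
    (G : SimpleGraph (Fin n ⊕ Fin k))
    (hG : G = SimpleGraph.fromRel (fun u v =>
      ∃ (I : Finset (Fin n)) (hI : I.card = k) (a : Fin k),
        I ⊆ S ∧ u = Sum.inl ((I.orderIsoOfFin hI a : Fin n)) ∧ v = Sum.inr a)) :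
    G.IsAcyclic :=
  stmt12_general k n S hS G hG
end
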